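/- Let Θ be an antisymmetric real n×n matrix. For smooth A : ℝ^n → ℝ^n define F(A)_{ab} = ∂A_b/∂x^a − ∂A_a/∂x^b + {A_a, A_b}_Θ, where {f,g}_Θ = Σ Θ^{ij} ∂f/∂x^i · ∂g/∂x^j. For a smooth gauge parameter f : ℝ^n → ℝ define the infinitesimal gauge transformation δ_f A_a = ∂f/∂x^a + {A_a, f}_Θ. Then the induced first-order variation of F is covariant: for all a,b and all x, ∂(δ_f A_b)/∂x^a − ∂(δ_f A_a)/∂x^b + {δ_f A_a, A_b}_Θ + {A_a, δ_f A_b}_Θ = {F(A)_{ab}, f}_Θ. -/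

import Mathlib

open scoped BigOperators

/-- partial derivative `∂/∂x^i` of a scalar function on `ℝ^n`. -/
noncomputable def pdb {n : ℕ} (i : Fin n) (h : (Fin n → ℝ) → ℝ) (x : Fin n → ℝ) : ℝ :=
  fderiv ℝ h x (Pi.single i 1)

/-- the constant Poisson bracket `{f,g}_Θ = Σ_{i,j} Θ^{ij} ∂f/∂x^i ∂g/∂x^j` on `ℝ^n`. -/
noncomputable def pbTheta {n : ℕ} (Θ : Matrix (Fin n) (Fin n) ℝ)
    (f g : (Fin n → ℝ) → ℝ) (x : Fin n → ℝ) : ℝ :=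
  ∑ i, ∑ j, Θ i j * pdb i f x * pdb j g x

/-- the field strength `F(A)_{ab} = ∂_a A_b − ∂_b A_a + {A_a, A_b}_Θ`. -/
noncomputable def Fstr {n : ℕ} (Θ : Matrix (Fin n) (Fin n) ℝ)
    (A : (Fin n → ℝ) → (Fin n → ℝ)) (a b : Fin n) (x : Fin n → ℝ) : ℝ :=
  pdb a (fun x => A x b) x - pdb b (fun x => A x a) x +
    pbTheta Θ (fun x => A x a) (fun x => A x b) x

/-- the infinitesimal gauge transformation `δ_f A_a = ∂_a f + {A_a, f}_Θ`. -/
noncomputable def deltaA {n : ℕ} (Θ : Matrix (Fin n) (Fin n) ℝ)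
    (A : (Fin n → ℝ) → (Fin n → ℝ)) (f : (Fin n → ℝ) → ℝ)
    (a : Fin n) (x : Fin n → ℝ) : ℝ :=
  pdb a f x + pbTheta Θ (fun x => A x a) f x

lemma contDiff_pdb {n : ℕ} {i : Fin n} {h : (Fin n → ℝ) → ℝ} (hh : ContDiff ℝ (⊤ : ℕ∞) h) :
    ContDiff ℝ (⊤ : ℕ∞) (pdb i h) :=
  (hh.fderiv_right (by simp)).clm_apply contDiff_const

lemma pdb_add {n : ℕ} {g h : (Fin n → ℝ) → ℝ} {x : Fin n → ℝ} (i : Fin n)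
    (hg : DifferentiableAt ℝ g x) (hh : DifferentiableAt ℝ h x) :
    pdb i (fun y => g y + h y) x = pdb i g x + pdb i h x := by
  simp [pdb, fderiv_fun_add hg hh]

lemma pdb_sub {n : ℕ} {g h : (Fin n → ℝ) → ℝ} {x : Fin n → ℝ} (i : Fin n)
    (hg : DifferentiableAt ℝ g x) (hh : DifferentiableAt ℝ h x) :
    pdb i (fun y => g y - h y) x = pdb i g x - pdb i h x := by
  simp [pdb, fderiv_fun_sub hg hh]

lemma pdb_mul {n : ℕ} {g h : (Fin n → ℝ) → ℝ} {x : Fin n → ℝ} (i : Fin n)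
    (hg : DifferentiableAt ℝ g x) (hh : DifferentiableAt ℝ h x) :
    pdb i (fun y => g y * h y) x = pdb i g x * h x + g x * pdb i h x := by
  simp [pdb, fderiv_fun_mul hg hh]; ring

lemma pdb_const_mul {n : ℕ} {g : (Fin n → ℝ) → ℝ} {x : Fin n → ℝ} (i : Fin n) (c : ℝ)
    (hg : DifferentiableAt ℝ g x) :
    pdb i (fun y => c * g y) x = c * pdb i g x := by
  simp [pdb, fderiv_const_mul hg]

lemma pdb_sum {n : ℕ} {ι : Type*} {s : Finset ι} {F : ι → (Fin n → ℝ) → ℝ} {x : Fin n → ℝ}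
    (i : Fin n) (hF : ∀ k ∈ s, DifferentiableAt ℝ (F k) x) :
    pdb i (fun y => ∑ k ∈ s, F k y) x = ∑ k ∈ s, pdb i (F k) x := by
  simp [pdb, fderiv_fun_sum hF]

lemma contDiff_pbTheta {n : ℕ} {Θ : Matrix (Fin n) (Fin n) ℝ} {g h : (Fin n → ℝ) → ℝ}
    (hg : ContDiff ℝ (⊤ : ℕ∞) g) (hh : ContDiff ℝ (⊤ : ℕ∞) h) :
    ContDiff ℝ (⊤ : ℕ∞) (pbTheta Θ g h) := by
  unfold pbTheta
  exact ContDiff.sum fun i _ => ContDiff.sum fun j _ =>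
    ((contDiff_const.mul (contDiff_pdb hg)).mul (contDiff_pdb hh))

lemma pdb_comm {n : ℕ} {h : (Fin n → ℝ) → ℝ} (hh : ContDiff ℝ (⊤ : ℕ∞) h)
    (i j : Fin n) (x : Fin n → ℝ) : pdb i (pdb j h) x = pdb j (pdb i h) x := by
  have hd : ContDiff ℝ (⊤ : ℕ∞) (fderiv ℝ h) := hh.fderiv_right (by simp)
  have hexp : ∀ u v : Fin n, pdb u (pdb v h) x
      = fderiv ℝ (fderiv ℝ h) x (Pi.single u 1) (Pi.single v 1) := by
    intro u v
    have : pdb v h = fun y => fderiv ℝ h y (Pi.single v 1) := rfl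
    rw [pdb, this, fderiv_clm_apply (hd.differentiable (by simp) x) (differentiableAt_const _)]
    simp
  rw [hexp, hexp]
  exact (hh.contDiffAt.isSymmSndFDerivAt (by rw [minSmoothness_of_isRCLikeNormedField]; exact WithTop.coe_le_coe.mpr (le_top : (2 : ℕ∞) ≤ ⊤))) _ _

lemma pdb_pbTheta {n : ℕ} (Θ : Matrix (Fin n) (Fin n) ℝ) {g h : (Fin n → ℝ) → ℝ}
    (hg : ContDiff ℝ (⊤ : ℕ∞) g) (hh : ContDiff ℝ (⊤ : ℕ∞) h) (e : Fin n) (x : Fin n → ℝ) :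
    pdb e (pbTheta Θ g h) x
      = ∑ i, ∑ j, Θ i j *
          (pdb e (pdb i g) x * pdb j h x + pdb i g x * pdb e (pdb j h) x) := by
  have hdg : ∀ v : Fin n, Differentiable ℝ (pdb v g) :=
    fun v => (contDiff_pdb hg).differentiable (by simp)
  have hdh : ∀ v : Fin n, Differentiable ℝ (pdb v h) :=
    fun v => (contDiff_pdb hh).differentiable (by simp)
  have h1 : pbTheta Θ g h = fun y => ∑ i, ∑ j, Θ i j * pdb i g y * pdb j h y := rfl
  rw [h1, pdb_sum e (fun i _ => DifferentiableAt.fun_sum fun j _ =>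
    ((differentiableAt_const (Θ i j)).fun_mul ((hdg i) x)).fun_mul ((hdh j) x))]
  refine Finset.sum_congr rfl fun i _ => ?_
  rw [pdb_sum e (fun j _ => ((differentiableAt_const (Θ i j)).fun_mul ((hdg i) x)).fun_mul ((hdh j) x))]
  refine Finset.sum_congr rfl fun j _ => ?_
  have h2 : (fun y => Θ i j * pdb i g y * pdb j h y)
      = fun y => Θ i j * (pdb i g y * pdb j h y) := by funext y; ring
  rw [h2, pdb_const_mul e _ (((hdg i) x).fun_mul ((hdh j) x)), pdb_mul e ((hdg i) x) ((hdh j) x)]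

lemma pdb_deltaA {n : ℕ} (Θ : Matrix (Fin n) (Fin n) ℝ)
    {A : (Fin n → ℝ) → (Fin n → ℝ)} {f : (Fin n → ℝ) → ℝ}
    (hA : ContDiff ℝ (⊤ : ℕ∞) A) (hf : ContDiff ℝ (⊤ : ℕ∞) f) (c : Fin n) (e : Fin n) (x : Fin n → ℝ) :
    pdb e (deltaA Θ A f c) x
      = pdb e (pdb c f) x + ∑ i, ∑ j, Θ i j *
          (pdb e (pdb i (fun y => A y c)) x * pdb j f x
            + pdb i (fun y => A y c) x * pdb e (pdb j f) x) := by
  have hAc : ContDiff ℝ (⊤ : ℕ∞) (fun y => A y c) := contDiff_pi.mp hA c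
  have h1 : deltaA Θ A f c = fun y => pdb c f y + pbTheta Θ (fun z => A z c) f y := rfl
  rw [h1, pdb_add e ((contDiff_pdb hf).differentiable (by simp) x)
    ((contDiff_pbTheta hAc hf).differentiable (by simp) x), pdb_pbTheta Θ hAc hf e x]

lemma pdb_Fstr {n : ℕ} (Θ : Matrix (Fin n) (Fin n) ℝ)
    {A : (Fin n → ℝ) → (Fin n → ℝ)} (hA : ContDiff ℝ (⊤ : ℕ∞) A)
    (a b : Fin n) (e : Fin n) (x : Fin n → ℝ) :
    pdb e (Fstr Θ A a b) x
      = pdb e (pdb a (fun y => A y b)) x - pdb e (pdb b (fun y => A y a)) x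
        + ∑ i, ∑ j, Θ i j *
          (pdb e (pdb i (fun y => A y a)) x * pdb j (fun y => A y b) x
            + pdb i (fun y => A y a) x * pdb e (pdb j (fun y => A y b)) x) := by
  have hAa : ContDiff ℝ (⊤ : ℕ∞) (fun y => A y a) := contDiff_pi.mp hA a
  have hAb : ContDiff ℝ (⊤ : ℕ∞) (fun y => A y b) := contDiff_pi.mp hA b
  have h1 : Fstr Θ A a b = fun y =>
      (pdb a (fun z => A z b) y - pdb b (fun z => A z a) y)
        + pbTheta Θ (fun z => A z a) (fun z => A z b) y := rfl
  rw [h1, pdb_add e (((contDiff_pdb hAb).differentiable (by simp) x).fun_sub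
      ((contDiff_pdb hAa).differentiable (by simp) x))
    ((contDiff_pbTheta hAa hAb).differentiable (by simp) x),
    pdb_sub e ((contDiff_pdb hAb).differentiable (by simp) x)
      ((contDiff_pdb hAa).differentiable (by simp) x),
    pdb_pbTheta Θ hAa hAb e x]

lemma flat4 {M : Type*} [AddCommMonoid M] {m : ℕ} (F : Fin m → Fin m → Fin m → Fin m → M) :
    (∑ i, ∑ j, ∑ k, ∑ l, F i j k l)
      = ∑ p : Fin m × Fin m × Fin m × Fin m, F p.1 p.2.1 p.2.2.1 p.2.2.2 := by
  simp [Fintype.sum_prod_type]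
lemma alg {n : ℕ} (Θ : Matrix (Fin n) (Fin n) ℝ) (hΘ : ∀ i j, Θ i j = -Θ j i)
    (a b : Fin n) (Pa Pb Ff : Fin n → ℝ) (Qa Qb Qf : Fin n → Fin n → ℝ)
    (hQa : ∀ i j, Qa i j = Qa j i) (hQb : ∀ i j, Qb i j = Qb j i)
    (hQf : ∀ i j, Qf i j = Qf j i) :
    (Qf a b + ∑ i, ∑ j, Θ i j * (Qb a i * Ff j + Pb i * Qf a j))
      - (Qf b a + ∑ i, ∑ j, Θ i j * (Qa b i * Ff j + Pa i * Qf b j))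
      + (∑ i, ∑ j, Θ i j * (Qf i a + ∑ k, ∑ l, Θ k l * (Qa i k * Ff l + Pa k * Qf i l)) * Pb j)
      + (∑ i, ∑ j, Θ i j * Pa i * (Qf j b + ∑ k, ∑ l, Θ k l * (Qb j k * Ff l + Pb k * Qf j l)))
    = ∑ i, ∑ j, Θ i j * (Qb i a - Qa i b + ∑ k, ∑ l, Θ k l * (Qa i k * Pb l + Pa k * Qb i l)) * Ff j := by
  classical
  -- split of term 1 sum
  have hT1 : (∑ i, ∑ j, Θ i j * (Qb a i * Ff j + Pb i * Qf a j))
      = (∑ i, ∑ j, Θ i j * (Qb a i * Ff j)) + (∑ i, ∑ j, Θ i j * (Pb i * Qf a j)) := by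
    simp only [mul_add, Finset.sum_add_distrib]
  have hT2 : (∑ i, ∑ j, Θ i j * (Qa b i * Ff j + Pa i * Qf b j))
      = (∑ i, ∑ j, Θ i j * (Qa b i * Ff j)) + (∑ i, ∑ j, Θ i j * (Pa i * Qf b j)) := by
    simp only [mul_add, Finset.sum_add_distrib]
  -- split of term 3 sum
  have hS3 : ∀ i j : Fin n,
      Θ i j * (Qf i a + ∑ k, ∑ l, Θ k l * (Qa i k * Ff l + Pa k * Qf i l)) * Pb j
      = Θ i j * (Qf i a * Pb j)
        + ∑ k, ∑ l, (Θ i j * Θ k l * (Qa i k * Ff l * Pb j)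
            + Θ i j * Θ k l * (Pa k * Qf i l * Pb j)) := by
    intro i j
    have h1 : Θ i j * (∑ k, ∑ l, Θ k l * (Qa i k * Ff l + Pa k * Qf i l)) * Pb j
        = ∑ k, ∑ l, (Θ i j * Θ k l * (Qa i k * Ff l * Pb j)
            + Θ i j * Θ k l * (Pa k * Qf i l * Pb j)) := by
      rw [Finset.mul_sum, Finset.sum_mul]
      refine Finset.sum_congr rfl fun k _ => ?_
      rw [Finset.mul_sum, Finset.sum_mul]
      refine Finset.sum_congr rfl fun l _ => ?_
      ring
    calc Θ i j * (Qf i a + ∑ k, ∑ l, Θ k l * (Qa i k * Ff l + Pa k * Qf i l)) * Pb j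
        = Θ i j * (Qf i a * Pb j)
          + Θ i j * (∑ k, ∑ l, Θ k l * (Qa i k * Ff l + Pa k * Qf i l)) * Pb j := by ring
      _ = _ := by rw [h1]
  have hT3 : (∑ i, ∑ j, Θ i j * (Qf i a + ∑ k, ∑ l, Θ k l * (Qa i k * Ff l + Pa k * Qf i l)) * Pb j)
      = (∑ i, ∑ j, Θ i j * (Qf i a * Pb j))
        + ((∑ i, ∑ j, ∑ k, ∑ l, Θ i j * Θ k l * (Qa i k * Ff l * Pb j))
          + (∑ i, ∑ j, ∑ k, ∑ l, Θ i j * Θ k l * (Pa k * Qf i l * Pb j))) := by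
    calc (∑ i, ∑ j, Θ i j * (Qf i a + ∑ k, ∑ l, Θ k l * (Qa i k * Ff l + Pa k * Qf i l)) * Pb j)
        = ∑ i, ∑ j, (Θ i j * (Qf i a * Pb j)
            + ∑ k, ∑ l, (Θ i j * Θ k l * (Qa i k * Ff l * Pb j)
              + Θ i j * Θ k l * (Pa k * Qf i l * Pb j))) :=
          Finset.sum_congr rfl fun i _ => Finset.sum_congr rfl fun j _ => hS3 i j
      _ = _ := by simp only [Finset.sum_add_distrib]
  -- split of term 4 sum
  have hS4 : ∀ i j : Fin n,
      Θ i j * Pa i * (Qf j b + ∑ k, ∑ l, Θ k l * (Qb j k * Ff l + Pb k * Qf j l))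
      = Θ i j * (Pa i * Qf j b)
        + ∑ k, ∑ l, (Θ i j * Θ k l * (Pa i * Qb j k * Ff l)
            + Θ i j * Θ k l * (Pa i * Pb k * Qf j l)) := by
    intro i j
    have h1 : Θ i j * Pa i * (∑ k, ∑ l, Θ k l * (Qb j k * Ff l + Pb k * Qf j l))
        = ∑ k, ∑ l, (Θ i j * Θ k l * (Pa i * Qb j k * Ff l)
            + Θ i j * Θ k l * (Pa i * Pb k * Qf j l)) := by
      rw [Finset.mul_sum]
      refine Finset.sum_congr rfl fun k _ => ?_
      rw [Finset.mul_sum]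
      refine Finset.sum_congr rfl fun l _ => ?_
      ring
    calc Θ i j * Pa i * (Qf j b + ∑ k, ∑ l, Θ k l * (Qb j k * Ff l + Pb k * Qf j l))
        = Θ i j * (Pa i * Qf j b)
          + Θ i j * Pa i * (∑ k, ∑ l, Θ k l * (Qb j k * Ff l + Pb k * Qf j l)) := by ring
      _ = _ := by rw [h1]
  have hT4 : (∑ i, ∑ j, Θ i j * Pa i * (Qf j b + ∑ k, ∑ l, Θ k l * (Qb j k * Ff l + Pb k * Qf j l)))
      = (∑ i, ∑ j, Θ i j * (Pa i * Qf j b))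
        + ((∑ i, ∑ j, ∑ k, ∑ l, Θ i j * Θ k l * (Pa i * Qb j k * Ff l))
          + (∑ i, ∑ j, ∑ k, ∑ l, Θ i j * Θ k l * (Pa i * Pb k * Qf j l))) := by
    calc (∑ i, ∑ j, Θ i j * Pa i * (Qf j b + ∑ k, ∑ l, Θ k l * (Qb j k * Ff l + Pb k * Qf j l)))
        = ∑ i, ∑ j, (Θ i j * (Pa i * Qf j b)
            + ∑ k, ∑ l, (Θ i j * Θ k l * (Pa i * Qb j k * Ff l)
              + Θ i j * Θ k l * (Pa i * Pb k * Qf j l))) :=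
          Finset.sum_congr rfl fun i _ => Finset.sum_congr rfl fun j _ => hS4 i j
      _ = _ := by simp only [Finset.sum_add_distrib]
  -- split of the right-hand side
  have hSR : ∀ i j : Fin n,
      Θ i j * (Qb i a - Qa i b + ∑ k, ∑ l, Θ k l * (Qa i k * Pb l + Pa k * Qb i l)) * Ff j
      = Θ i j * (Qb i a * Ff j) - Θ i j * (Qa i b * Ff j)
        + ∑ k, ∑ l, (Θ i j * Θ k l * (Qa i k * Pb l * Ff j)
            + Θ i j * Θ k l * (Pa k * Qb i l * Ff j)) := by
    intro i j
    have h1 : Θ i j * (∑ k, ∑ l, Θ k l * (Qa i k * Pb l + Pa k * Qb i l)) * Ff j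
        = ∑ k, ∑ l, (Θ i j * Θ k l * (Qa i k * Pb l * Ff j)
            + Θ i j * Θ k l * (Pa k * Qb i l * Ff j)) := by
      rw [Finset.mul_sum, Finset.sum_mul]
      refine Finset.sum_congr rfl fun k _ => ?_
      rw [Finset.mul_sum, Finset.sum_mul]
      refine Finset.sum_congr rfl fun l _ => ?_
      ring
    calc Θ i j * (Qb i a - Qa i b + ∑ k, ∑ l, Θ k l * (Qa i k * Pb l + Pa k * Qb i l)) * Ff j
        = Θ i j * (Qb i a * Ff j) - Θ i j * (Qa i b * Ff j)
          + Θ i j * (∑ k, ∑ l, Θ k l * (Qa i k * Pb l + Pa k * Qb i l)) * Ff j := by ring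
      _ = _ := by rw [h1]
  have hR : (∑ i, ∑ j, Θ i j * (Qb i a - Qa i b + ∑ k, ∑ l, Θ k l * (Qa i k * Pb l + Pa k * Qb i l)) * Ff j)
      = (∑ i, ∑ j, Θ i j * (Qb i a * Ff j)) - (∑ i, ∑ j, Θ i j * (Qa i b * Ff j))
        + ((∑ i, ∑ j, ∑ k, ∑ l, Θ i j * Θ k l * (Qa i k * Pb l * Ff j))
          + (∑ i, ∑ j, ∑ k, ∑ l, Θ i j * Θ k l * (Pa k * Qb i l * Ff j))) := by
    calc (∑ i, ∑ j, Θ i j * (Qb i a - Qa i b + ∑ k, ∑ l, Θ k l * (Qa i k * Pb l + Pa k * Qb i l)) * Ff j)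
        = ∑ i, ∑ j, (Θ i j * (Qb i a * Ff j) - Θ i j * (Qa i b * Ff j)
            + ∑ k, ∑ l, (Θ i j * Θ k l * (Qa i k * Pb l * Ff j)
              + Θ i j * Θ k l * (Pa k * Qb i l * Ff j))) :=
          Finset.sum_congr rfl fun i _ => Finset.sum_congr rfl fun j _ => hSR i j
      _ = _ := by simp only [Finset.sum_add_distrib, Finset.sum_sub_distrib]
  -- elementary double-sum identities
  have fD1 : (∑ i, ∑ j, Θ i j * (Qb a i * Ff j)) = (∑ i, ∑ j, Θ i j * (Qb i a * Ff j)) :=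
    Finset.sum_congr rfl fun i _ => Finset.sum_congr rfl fun j _ => by rw [hQb a i]
  have fD3 : (∑ i, ∑ j, Θ i j * (Qa b i * Ff j)) = (∑ i, ∑ j, Θ i j * (Qa i b * Ff j)) :=
    Finset.sum_congr rfl fun i _ => Finset.sum_congr rfl fun j _ => by rw [hQa b i]
  have fD46 : (∑ i, ∑ j, Θ i j * (Pa i * Qf j b)) = (∑ i, ∑ j, Θ i j * (Pa i * Qf b j)) :=
    Finset.sum_congr rfl fun i _ => Finset.sum_congr rfl fun j _ => by rw [hQf j b]
  have fD25 : (∑ i, ∑ j, Θ i j * (Qf i a * Pb j)) = -(∑ i, ∑ j, Θ i j * (Pb i * Qf a j)) := by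
    rw [Finset.sum_comm, ← Finset.sum_neg_distrib]
    refine Finset.sum_congr rfl fun p _ => ?_
    rw [← Finset.sum_neg_distrib]
    refine Finset.sum_congr rfl fun q _ => ?_
    rw [hΘ q p, hQf q a]
    ring
  -- quadruple-sum reindexing identities
  have hσ₁ : Function.Bijective
      (fun p : Fin n × Fin n × Fin n × Fin n => (p.2.2.1, p.2.2.2, p.1, p.2.1)) :=
    Function.Involutive.bijective (fun p => rfl)
  have hσ₂ : Function.Bijective
      (fun p : Fin n × Fin n × Fin n × Fin n => (p.2.2.1, p.2.2.2, p.2.1, p.1)) := by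
    refine Finite.injective_iff_bijective.mp ?_
    rintro ⟨i, j, k, l⟩ ⟨i', j', k', l'⟩ h
    simp only [Prod.mk.injEq] at h ⊢
    tauto
  have fQ1 : (∑ i, ∑ j, ∑ k, ∑ l, Θ i j * Θ k l * (Qa i k * Ff l * Pb j))
      = (∑ i, ∑ j, ∑ k, ∑ l, Θ i j * Θ k l * (Qa i k * Pb l * Ff j)) := by
    rw [flat4, flat4]
    exact Fintype.sum_bijective _ hσ₁ _ _
      (fun p => by rcases p with ⟨i, j, k, l⟩; dsimp only; rw [hQa i k]; ring)
  have fQ3 : (∑ i, ∑ j, ∑ k, ∑ l, Θ i j * Θ k l * (Pa i * Qb j k * Ff l))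
      = (∑ i, ∑ j, ∑ k, ∑ l, Θ i j * Θ k l * (Pa k * Qb i l * Ff j)) := by
    rw [flat4, flat4]
    exact Fintype.sum_bijective _ hσ₁ _ _
      (fun p => by rcases p with ⟨i, j, k, l⟩; dsimp only; rw [hQb j k]; ring)
  have fQ24 : (∑ i, ∑ j, ∑ k, ∑ l, Θ i j * Θ k l * (Pa i * Pb k * Qf j l))
      = -(∑ i, ∑ j, ∑ k, ∑ l, Θ i j * Θ k l * (Pa k * Qf i l * Pb j)) := by
    rw [flat4, flat4, ← Finset.sum_neg_distrib]
    refine (Fintype.sum_bijective _ hσ₂ _ _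
      (fun p => ?_)).symm
    rcases p with ⟨i, j, k, l⟩
    dsimp only
    rw [hΘ j i, hQf l i]
    ring
  rw [hT1, hT2, hT3, hT4, hR, fD1, fD3, fD46, fD25, fQ1, fQ3, fQ24, hQf a b]
  ring

theorem stmt_18 {n : ℕ} (Θ : Matrix (Fin n) (Fin n) ℝ)
    (hΘ : ∀ i j, Θ i j = -Θ j i)
    (A : (Fin n → ℝ) → (Fin n → ℝ)) (hA : ContDiff ℝ (⊤ : ℕ∞) A)
    (f : (Fin n → ℝ) → ℝ) (hf : ContDiff ℝ (⊤ : ℕ∞) f) :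
    ∀ (a b : Fin n) (x : Fin n → ℝ),
      pdb a (deltaA Θ A f b) x - pdb b (deltaA Θ A f a) x +
        pbTheta Θ (deltaA Θ A f a) (fun x => A x b) x +
        pbTheta Θ (fun x => A x a) (deltaA Θ A f b) x =
      pbTheta Θ (Fstr Θ A a b) f x := by
  intro a b x
  simp only [pbTheta]
  simp only [pdb_deltaA Θ hA hf a, pdb_deltaA Θ hA hf b, pdb_Fstr Θ hA a b]
  exact alg Θ hΘ a b (fun i => pdb i (fun y => A y a) x) (fun i => pdb i (fun y => A y b) x)
    (fun i => pdb i f x)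
    (fun u v => pdb u (pdb v (fun y => A y a)) x) (fun u v => pdb u (pdb v (fun y => A y b)) x)
    (fun u v => pdb u (pdb v f) x)
    (fun u v => pdb_comm (contDiff_pi.mp hA a) u v x)
    (fun u v => pdb_comm (contDiff_pi.mp hA b) u v x)
    (fun u v => pdb_comm hf u v x)
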